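/- arXiv:2005.04284 — 3 statements merged into one kernel-verified Lean document; each statement's English description precedes it below -/
import Mathlib

section
/- For every partition λ of a positive integer n, the Gini index of λ equals the second elementary symmetric polynomial of the conjugate partition: g(λ) = e₂(λ̃). -/
/-!
Column `j` of the Young diagram of `λ` occupies rows `1, …, λ̃ⱼ`, so counting the cells by
columns gives `Σᵢ i·λᵢ = Σⱼ C(λ̃ⱼ + 1, 2)`. Since `Σⱼ λ̃ⱼ = n`, expanding `(Σⱼ λ̃ⱼ)²` yields
`C(n + 1, 2) = Σⱼ C(λ̃ⱼ + 1, 2) + e₂(λ̃)`.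
-/

/-- The conjugate partition: `conjugatePart lam j` is the number of indices `i`
with `lam i ≥ j + 1`, i.e., the `(j+1)`-st part of the conjugate of `lam`
(padded to length `n`). -/
def conjugatePart {n : ℕ} (lam : Fin n → ℕ) (j : Fin n) : ℕ :=
  (Finset.univ.filter fun i : Fin n => (j : ℕ) + 1 ≤ lam i).card

open Finset

theorem sq_sum_eq_sum_sq_add_two_mul_sum_Ioi {ι R : Type*} [Fintype ι] [LinearOrder ι]
    [LocallyFiniteOrderTop ι] [LocallyFiniteOrderBot ι] [CommSemiring R] (f : ι → R) :
    (∑ i, f i) ^ 2 = ∑ i, f i ^ 2 + 2 * ∑ i, ∑ j ∈ Ioi i, f i * f j := by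
  classical
  have diag (i : ι) : ∑ j, f j * f i = f i ^ 2 + ∑ j ∈ {i}ᶜ, f j * f i := by
    rw [← sum_add_sum_compl {i}, sum_singleton, sq]
  rw [sq, sum_mul_sum, sum_comm]
  simp only [diag, sum_add_distrib, ← sum_sum_Ioi_add_eq_sum_sum_off_diag, two_mul]
  simp only [mul_comm]

theorem Nat.sum_range_add_one_eq_choose_two (m : ℕ) :
    ∑ k ∈ range m, (k + 1) = (m + 1).choose 2 := by
  induction m with
  | zero => rfl
  | succ m ih =>
    rw [sum_range_succ, ih, Nat.choose_succ_succ' (m + 1), Nat.choose_one_right, add_comm]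

theorem Nat.sum_add_one_choose_two {ι : Type*} [Fintype ι] [LinearOrder ι]
    [LocallyFiniteOrderTop ι] [LocallyFiniteOrderBot ι] (c : ι → ℕ) :
    (∑ i, c i + 1).choose 2 = ∑ i, (c i + 1).choose 2 + ∑ i, ∑ j ∈ Ioi i, c i * c j := by
  have choose_two (m : ℕ) : (m + 1).choose 2 * 2 = (m + 1) * m := by
    simpa using (Nat.add_one_mul_choose_eq m 1).symm
  apply Nat.eq_of_mul_eq_mul_right two_pos
  have sum_succ_mul : ∑ i, (c i + 1) * c i = ∑ i, c i ^ 2 + ∑ i, c i := by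
    simp only [add_one_mul, sq, sum_add_distrib]
  rw [add_mul, sum_mul]
  simp only [choose_two]
  linarith [sq_sum_eq_sum_sq_add_two_mul_sum_Ioi c]

theorem Fin.sum_filter_val_lt {M : Type*} [AddCommMonoid M] {n m : ℕ} (hm : m ≤ n) (f : ℕ → M) :
    ∑ i ∈ univ.filter fun i : Fin n => (i : ℕ) < m, f i = ∑ k ∈ range m, f k := by
  rw [sum_filter, Fin.sum_univ_eq_sum_range (fun k => if k < m then f k else 0), ← sum_filter]
  congr 1
  ext k
  simp only [mem_filter, mem_range]
  omega

section conjugatePart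

variable {n : ℕ} {lam : Fin n → ℕ}

theorem conjugatePart_le (lam : Fin n → ℕ) (j : Fin n) : conjugatePart lam j ≤ n :=
  (card_le_univ _).trans_eq (Fintype.card_fin n)

theorem val_lt_conjugatePart_iff (hlam : Antitone lam) (i j : Fin n) :
    (i : ℕ) < conjugatePart lam j ↔ (j : ℕ) < lam i :=
  Fin.lt_card_filter_univ_iff_apply_of_imp _ fun _ _ hab hb => hb.trans (hlam hab)

theorem sum_conjugatePart (hle : ∀ i, lam i ≤ n) : ∑ j, conjugatePart lam j = ∑ i, lam i := by
  have row (i : Fin n) :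
      #(univ.bipartiteAbove (fun (i j : Fin n) => (j : ℕ) < lam i) i) = lam i :=
    Fin.card_filter_val_lt.trans (min_eq_right (hle i))
  rw [← sum_congr rfl fun i _ => row i, sum_card_bipartiteAbove_eq_sum_card_bipartiteBelow]
  rfl

theorem sum_succ_mul_eq_sum_choose_two (hlam : Antitone lam) (hle : ∀ i, lam i ≤ n) :
    ∑ i : Fin n, ((i : ℕ) + 1) * lam i = ∑ j, (conjugatePart lam j + 1).choose 2 := by
  have row (i : Fin n) :
      ((i : ℕ) + 1) * lam i = ∑ j : Fin n, if (j : ℕ) < lam i then (i : ℕ) + 1 else 0 := by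
    rw [← sum_filter, sum_const, Fin.card_filter_val_lt, min_eq_right (hle i), smul_eq_mul,
      mul_comm]
  have column (j : Fin n) : ∑ i : Fin n, (if (j : ℕ) < lam i then (i : ℕ) + 1 else 0)
      = (conjugatePart lam j + 1).choose 2 := by
    simp_rw [← val_lt_conjugatePart_iff hlam]
    rw [← sum_filter, Fin.sum_filter_val_lt (conjugatePart_le lam j) fun k => k + 1,
      Nat.sum_range_add_one_eq_choose_two]
  simp only [row]
  rw [sum_comm]
  exact sum_congr rfl fun j _ => column j

end conjugatePart

theorem gini_stmt1_general (n : ℕ) (lam : Fin n → ℕ)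
    (hanti : ∀ i j : Fin n, i ≤ j → lam j ≤ lam i)
    (hsum : ∑ i, lam i = n) :
    ((n + 1).choose 2 : ℤ) - ∑ i : Fin n, (((i : ℕ) + 1) * lam i : ℤ)
      = ((∑ i : Fin n, ∑ j ∈ Finset.Ioi i,
          conjugatePart lam i * conjugatePart lam j : ℕ) : ℤ) := by
  have hle (i : Fin n) : lam i ≤ n :=
    hsum ▸ single_le_sum (fun _ _ => Nat.zero_le _) (mem_univ i)
  have key := Nat.sum_add_one_choose_two (conjugatePart lam)
  rw [sum_conjugatePart hle, hsum, ← sum_succ_mul_eq_sum_choose_two hanti hle] at key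
  rw [key]
  push_cast
  ring

/-- For every partition `lam` of a positive integer `n` (padded with zeros to
length `n`), the Gini index `g(λ) = C(n+1,2) − Σᵢ i·λᵢ` equals the second elementary
symmetric polynomial of the conjugate partition, `e₂(λ̃)`. -/
theorem gini_stmt1 (n : ℕ) (hn : 0 < n) (lam : Fin n → ℕ)
    (hanti : ∀ i j : Fin n, i ≤ j → lam j ≤ lam i)
    (hsum : ∑ i, lam i = n) :
    ((n + 1).choose 2 : ℤ) - ∑ i : Fin n, (((i : ℕ) + 1) * lam i : ℤ)
      = ((∑ i : Fin n, ∑ j ∈ Finset.Ioi i,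
          conjugatePart lam i * conjugatePart lam j : ℕ) : ℤ) :=
  gini_stmt1_general n lam hanti hsum
end

section
/- Let λ and μ be partitions of a positive integer n. If μ strictly precedes λ in the dominance order (μ ≺ λ), then g(μ) < g(λ) and e₂(λ) < e₂(μ). -/
/-!
With `d = λ - μ` and partial sums `S k = ∑_{i<k} d i`, dominance says `S k ≥ 0`, equal sizes
say `S n = 0`, and `μ ≠ λ` forces some `S k > 0` with `0 < k < n`. Summation by parts gives
`∑ c i * d i = ∑ (c i - c (i+1)) * S (i+1)`, which is therefore positive for strictly decreasing
weights (`c i = -(i+1)` yields the Gini index) and nonnegative for decreasing ones. Taking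
`c = μ` gives `∑ λ i ^ 2 - ∑ μ i ^ 2 = 2 ∑ μ i * d i + ∑ d i ^ 2 > 0`, and `2 e₂ = n ^ 2 - ∑ (parts) ^ 2`.
-/

/-- The Gini index of a partition of `n` padded with zeros to length `n`:
`g(λ) = C(n+1,2) − Σ_{i=1}^{n} i·λᵢ`. -/
def giniIndex (n : ℕ) (lam : Fin n → ℕ) : ℤ :=
  ((n + 1).choose 2 : ℤ) - ∑ i : Fin n, (((i : ℕ) + 1) * lam i : ℤ)

/-- The second elementary symmetric polynomial of the parts:
`e₂(λ) = Σ_{i < j} λᵢ λⱼ`. -/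
def eTwo (n : ℕ) (lam : Fin n → ℕ) : ℕ :=
  ∑ i : Fin n, ∑ j ∈ Finset.Ioi i, lam i * lam j

/-- The dominance order: `dominance n mu lam` means `μ ⪯ λ`, i.e.
`Σ_{i=1}^{k} μᵢ ≤ Σ_{i=1}^{k} λᵢ` for all `k`. -/
def dominance (n : ℕ) (mu lam : Fin n → ℕ) : Prop :=
  ∀ k : ℕ, ∑ i ∈ Finset.univ.filter (fun i : Fin n => (i : ℕ) < k), mu i
    ≤ ∑ i ∈ Finset.univ.filter (fun i : Fin n => (i : ℕ) < k), lam i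

open Finset

section OrderedAddGroup

variable {R : Type*} [AddCommGroup R] [PartialOrder R] {n : ℕ} {d : ℕ → R}

theorem exists_partialSum_pos (hS : ∀ k, 0 ≤ ∑ i ∈ range k, d i)
    (hd : ∑ i ∈ range n, d i = 0) (hne : ∃ i < n, d i ≠ 0) :
    ∃ i < n - 1, 0 < ∑ j ∈ range (i + 1), d j := by
  by_contra! hle
  obtain ⟨i, hi, hdi⟩ := hne
  have hzero : ∀ k ≤ n, 0 < k → ∑ j ∈ range k, d j = 0 := by
    rintro (_ | k) hk hk0
    · omega
    · rcases Nat.lt_or_ge k (n - 1) with hkn | hkn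
      · exact ((hS _).eq_of_not_lt (hle k hkn)).symm
      · rwa [show k + 1 = n by omega]
  apply hdi
  rw [← sum_range_succ_sub_sum d, hzero (i + 1) hi (by omega)]
  rcases i with _ | i
  · simp
  · rw [hzero (i + 1) hi.le (by omega), sub_zero]

end OrderedAddGroup

section OrderedRing

variable {R : Type*} [CommRing R] {n : ℕ} {b c d : ℕ → R}

theorem sum_mul_eq_sum_sub_mul_partialSum (hd : ∑ i ∈ range n, d i = 0) :
    ∑ i ∈ range n, c i * d i =
      ∑ i ∈ range (n - 1), (c i - c (i + 1)) * ∑ j ∈ range (i + 1), d j := by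
  simpa only [smul_eq_mul, hd, mul_zero, zero_sub, ← sum_neg_distrib, ← neg_mul, neg_sub]
    using sum_range_by_parts c d n

variable [LinearOrder R] [IsStrictOrderedRing R]

theorem sum_mul_nonneg_of_antitone (hc : Antitone c) (hS : ∀ k, 0 ≤ ∑ i ∈ range k, d i)
    (hd : ∑ i ∈ range n, d i = 0) : 0 ≤ ∑ i ∈ range n, c i * d i := by
  rw [sum_mul_eq_sum_sub_mul_partialSum hd]
  exact sum_nonneg fun i _ => mul_nonneg (sub_nonneg.2 (hc i.le_succ)) (hS _)

theorem sum_mul_pos_of_strictAnti (hc : StrictAnti c) (hS : ∀ k, 0 ≤ ∑ i ∈ range k, d i)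
    (hd : ∑ i ∈ range n, d i = 0) (hne : ∃ i < n, d i ≠ 0) :
    0 < ∑ i ∈ range n, c i * d i := by
  obtain ⟨k, hk, hSk⟩ := exists_partialSum_pos hS hd hne
  rw [sum_mul_eq_sum_sub_mul_partialSum hd]
  exact sum_pos' (fun i _ => mul_nonneg (sub_nonneg.2 (hc.antitone i.le_succ)) (hS _))
    ⟨k, mem_range.2 hk, mul_pos (sub_pos.2 (hc k.lt_succ_self)) hSk⟩

theorem sum_sq_lt_sum_add_sq (hb : Antitone b) (hS : ∀ k, 0 ≤ ∑ i ∈ range k, d i)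
    (hd : ∑ i ∈ range n, d i = 0) (hne : ∃ i < n, d i ≠ 0) :
    ∑ i ∈ range n, b i ^ 2 < ∑ i ∈ range n, (b i + d i) ^ 2 := by
  obtain ⟨i, hi, hdi⟩ := hne
  have hbd := sum_mul_nonneg_of_antitone hb hS hd
  have hdd : 0 < ∑ i ∈ range n, d i ^ 2 :=
    sum_pos' (fun i _ => sq_nonneg _) ⟨i, mem_range.2 hi, by positivity⟩
  have hexpand : ∑ i ∈ range n, (b i + d i) ^ 2 =
      ∑ i ∈ range n, b i ^ 2 + 2 * ∑ i ∈ range n, b i * d i + ∑ i ∈ range n, d i ^ 2 := by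
    rw [mul_sum, ← sum_add_distrib, ← sum_add_distrib]
    exact sum_congr rfl fun i _ => by ring
  linarith

end OrderedRing

def extendByZero {n : ℕ} (f : Fin n → ℕ) (i : ℕ) : ℤ :=
  if h : i < n then f ⟨i, h⟩ else 0

section ExtendByZero

variable {n : ℕ}

theorem sum_univ_eq_sum_range_extendByZero (f : Fin n → ℕ) (φ : ℕ → ℤ → ℤ) :
    ∑ i : Fin n, φ i (f i) = ∑ i ∈ range n, φ i (extendByZero f i) := by
  rw [← Fin.sum_univ_eq_sum_range]
  exact sum_congr rfl fun i _ => by simp [extendByZero]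

theorem sum_filter_lt_eq_sum_range_extendByZero (f : Fin n → ℕ) (k : ℕ) :
    ((∑ i ∈ univ.filter (fun i : Fin n => (i : ℕ) < k), f i : ℕ) : ℤ) =
      ∑ i ∈ range k, extendByZero f i := by
  rw [Nat.cast_sum, sum_filter,
    sum_univ_eq_sum_range_extendByZero f (fun i x => if i < k then x else 0), ← sum_filter]
  refine sum_subset (fun i => by simp) fun i hik hin => ?_
  simp_all [extendByZero]

theorem sum_range_extendByZero (f : Fin n → ℕ) :
    ∑ i ∈ range n, extendByZero f i = ∑ i, f i := by
  rw [Nat.cast_sum]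
  exact (sum_univ_eq_sum_range_extendByZero f fun _ x => x).symm

theorem antitone_extendByZero {f : Fin n → ℕ} (hf : Antitone f) : Antitone (extendByZero f) := by
  refine antitone_nat_of_succ_le fun i => ?_
  unfold extendByZero
  split_ifs
  · exact_mod_cast hf (Fin.mk_le_mk.2 i.le_succ)
  · omega
  · positivity
  · rfl

end ExtendByZero

theorem giniIndex_sub_giniIndex {n : ℕ} (lam mu : Fin n → ℕ) :
    giniIndex n lam - giniIndex n mu =
      ∑ i ∈ range n, -((i : ℤ) + 1) * (extendByZero lam i - extendByZero mu i) := by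
  have hweighted (f : Fin n → ℕ) := sum_univ_eq_sum_range_extendByZero f fun i x => (i + 1) * x
  simp only [giniIndex, hweighted]
  rw [sub_sub_sub_cancel_left, ← sum_sub_distrib]
  exact sum_congr rfl fun i _ => by ring

theorem sq_sum_eq_sum_sq_add_two_mul_eTwo {n : ℕ} (f : Fin n → ℕ) :
    (∑ i, f i) ^ 2 = ∑ i, f i ^ 2 + 2 * eTwo n f := by
  have hrow (i : Fin n) : ∑ j, f i * f j = f i ^ 2 + ∑ j ∈ {i}ᶜ, f j * f i := by
    rw [← sum_add_sum_compl {i}, sum_singleton, sq]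
    simp only [mul_comm]
  have hoff : ∑ i, ∑ j ∈ ({i}ᶜ : Finset (Fin n)), f j * f i = 2 * eTwo n f := by
    rw [← sum_sum_Ioi_add_eq_sum_sum_off_diag, eTwo, mul_sum]
    exact sum_congr rfl fun i _ => by rw [mul_sum]; exact sum_congr rfl fun j _ => by ring
  rw [sq, sum_mul_sum, sum_congr rfl fun i _ => hrow i, sum_add_distrib, hoff]

theorem gini_stmt2_general (n : ℕ) (lam mu : Fin n → ℕ)
    (hlam_sum : ∑ i, lam i = n)
    (hmu_anti : ∀ i j : Fin n, i ≤ j → mu j ≤ mu i)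
    (hmu_sum : ∑ i, mu i = n)
    (hdom : dominance n mu lam) (hne : mu ≠ lam) :
    giniIndex n mu < giniIndex n lam ∧ eTwo n lam < eTwo n mu := by
  set d : ℕ → ℤ := extendByZero lam - extendByZero mu
  have hS (k : ℕ) : 0 ≤ ∑ i ∈ range k, d i := by
    simp only [d, Pi.sub_apply, sum_sub_distrib, ← sum_filter_lt_eq_sum_range_extendByZero,
      sub_nonneg]
    exact_mod_cast hdom k
  have hd : ∑ i ∈ range n, d i = 0 := by
    simp only [d, Pi.sub_apply, sum_sub_distrib, sum_range_extendByZero, hlam_sum, hmu_sum,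
      sub_self]
  have hd_ne : ∃ i < n, d i ≠ 0 := by
    obtain ⟨i, hi⟩ := Function.ne_iff.1 hne
    exact ⟨i, i.isLt, by simp [d, extendByZero]; omega⟩
  refine ⟨?_, ?_⟩
  · have hpos := sum_mul_pos_of_strictAnti (c := fun i => -((i : ℤ) + 1))
      (fun i j h => neg_lt_neg (by simpa using h)) hS hd hd_ne
    exact sub_pos.1 (by rw [giniIndex_sub_giniIndex]; exact hpos)
  · have hsq := sum_sq_lt_sum_add_sq (antitone_extendByZero hmu_anti) hS hd hd_ne
    simp only [d, Pi.sub_apply, add_sub_cancel,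
      ← sum_univ_eq_sum_range_extendByZero _ fun _ x => x ^ 2] at hsq
    have hlam := sq_sum_eq_sum_sq_add_two_mul_eTwo lam
    have hmu := sq_sum_eq_sum_sq_add_two_mul_eTwo mu
    rw [hlam_sum] at hlam
    rw [hmu_sum] at hmu
    have : ∑ i, mu i ^ 2 < ∑ i, lam i ^ 2 := by exact_mod_cast hsq
    linarith

/-- If `μ` and `λ` are partitions of a positive integer `n` with `μ ≺ λ`
in the dominance order, then `g(μ) < g(λ)` and `e₂(λ) < e₂(μ)`. -/
theorem gini_stmt2 (n : ℕ) (hn : 0 < n) (lam mu : Fin n → ℕ)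
    (hlam_anti : ∀ i j : Fin n, i ≤ j → lam j ≤ lam i)
    (hlam_sum : ∑ i, lam i = n)
    (hmu_anti : ∀ i j : Fin n, i ≤ j → mu j ≤ mu i)
    (hmu_sum : ∑ i, mu i = n)
    (hdom : dominance n mu lam) (hne : mu ≠ lam) :
    giniIndex n mu < giniIndex n lam ∧ eTwo n lam < eTwo n mu :=
  gini_stmt2_general n lam mu hlam_sum hmu_anti hmu_sum hdom hne
end

section
/- Let λ and μ be distinct partitions of a positive integer n. If g(λ) = g(μ), then λ and μ are incomparable in the dominance order (neither μ ⪯ λ nor λ ⪯ μ). Consequently, every level set {λ ⊢ n : g(λ) = v} of the Gini index is an antichain in the dominance lattice of partitions of n. -/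
/-- A partition of `n` padded with zeros to length `n`: a non-increasing
sequence `(λ₁, …, λₙ)` of non-negative integers summing to `n`. -/
structure PaddedPartition (n : ℕ) where
  parts : Fin n → ℕ
  antitone' : ∀ i j : Fin n, i ≤ j → parts j ≤ parts i
  sum_parts : ∑ i, parts i = n

/-- The Gini index `g(λ) = C(n+1,2) − Σ_{i=1}^{n} i·λᵢ`. -/
def PaddedPartition.gini {n : ℕ} (lam : PaddedPartition n) : ℤ :=
  ((n + 1).choose 2 : ℤ) - ∑ i : Fin n, (((i : ℕ) + 1) * lam.parts i : ℤ)

/-- The dominance order: `μ ⪯ λ` iff `Σ_{i=1}^{k} μᵢ ≤ Σ_{i=1}^{k} λᵢ` for all `k`. -/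
def PaddedPartition.Dom {n : ℕ} (mu lam : PaddedPartition n) : Prop :=
  ∀ k : ℕ, ∑ i ∈ Finset.univ.filter (fun i : Fin n => (i : ℕ) < k), mu.parts i
    ≤ ∑ i ∈ Finset.univ.filter (fun i : Fin n => (i : ℕ) < k), lam.parts i

/-!
Summation by parts writes `Σ_k P_k(λ)`, the sum of the partial sums `P_k(λ) = λ₁ + ⋯ + λ_k`, as
`Σ_i (n + 1 − i) λ_i = n(n + 1) − Σ_i i λ_i`, so `g(λ) = Σ_k P_k(λ) − C(n + 1, 2)`. Hence if `μ ⪯ λ`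
and `g(μ) = g(λ)`, the pointwise inequalities `P_k(μ) ≤ P_k(λ)` must all be equalities, and a
partition is determined by its partial sums.
-/

open Finset

namespace PaddedPartition

variable {n : ℕ}

def partialSum (f : Fin n → ℕ) (k : ℕ) : ℕ :=
  ∑ i ∈ univ.filter (fun i : Fin n => (i : ℕ) < k), f i

theorem partialSum_succ (f : Fin n → ℕ) (i : Fin n) :
    partialSum f (i + 1) = partialSum f i + f i := by
  have hfilter : univ.filter (fun j : Fin n => (j : ℕ) < i + 1)
      = insert i (univ.filter (fun j : Fin n => (j : ℕ) < i)) := by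
    ext j
    simp only [mem_filter, mem_univ, true_and, mem_insert, Nat.lt_succ_iff_lt_or_eq, Fin.ext_iff]
    tauto
  rw [partialSum, hfilter, sum_insert (by simp), add_comm]
  rfl

theorem sum_partialSum (f : Fin n → ℕ) :
    ∑ k ∈ range (n + 1), partialSum f k = ∑ i, (n - i) * f i := by
  simp only [partialSum, sum_filter]
  rw [sum_comm]
  refine sum_congr rfl fun i _ => ?_
  have hcount : (range (n + 1)).filter (fun k => (i : ℕ) < k) = Ioc (i : ℕ) n := by
    ext k
    simp only [mem_filter, mem_range, mem_Ioc]
    omega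
  rw [← sum_filter, sum_const, hcount, Nat.card_Ioc, smul_eq_mul]

theorem gini_eq_sum_partialSum (lam : PaddedPartition n) :
    lam.gini = ∑ k ∈ range (n + 1), (partialSum lam.parts k : ℤ) - (n + 1).choose 2 := by
  have hchoose : ((n + 1).choose 2 : ℤ) * 2 = (n + 1) * n := by
    have h := Nat.add_one_mul_choose_eq n 1
    rw [Nat.choose_one_right] at h
    exact_mod_cast h.symm
  have hsum : ∑ i, (lam.parts i : ℤ) = n := by exact_mod_cast lam.sum_parts
  have hpartial : ∑ k ∈ range (n + 1), (partialSum lam.parts k : ℤ)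
      = ∑ i : Fin n, ((n : ℤ) - i) * lam.parts i := by
    rw [← Nat.cast_sum, sum_partialSum]
    push_cast
    exact sum_congr rfl fun i _ => by rw [Nat.cast_sub i.is_le']
  have hweights : ∑ i : Fin n, ((n : ℤ) - i) * lam.parts i
      = (n + 1) * ∑ i, (lam.parts i : ℤ) - ∑ i : Fin n, ((i : ℕ) + 1) * (lam.parts i : ℤ) := by
    rw [mul_sum, ← sum_sub_distrib]
    exact sum_congr rfl fun i _ => by ring
  rw [gini, hpartial, hweights, hsum]
  linear_combination hchoose

theorem ext {lam mu : PaddedPartition n} (h : lam.parts = mu.parts) : lam = mu := by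
  cases lam
  cases mu
  congr

theorem eq_of_partialSum_eq {lam mu : PaddedPartition n}
    (h : ∀ k ≤ n, partialSum lam.parts k = partialSum mu.parts k) : lam = mu := by
  refine ext (funext fun i => ?_)
  have hlam := partialSum_succ lam.parts i
  have hmu := partialSum_succ mu.parts i
  rw [h i i.is_le', h (i + 1) i.is_lt] at hlam
  omega

theorem eq_of_dom_of_gini_eq {lam mu : PaddedPartition n} (hdom : Dom mu lam)
    (hgini : mu.gini = lam.gini) : mu = lam := by
  have hsum : ∑ k ∈ range (n + 1), partialSum mu.parts k
      = ∑ k ∈ range (n + 1), partialSum lam.parts k := by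
    rw [gini_eq_sum_partialSum, gini_eq_sum_partialSum, sub_left_inj] at hgini
    exact_mod_cast hgini
  have hle : ∀ k ∈ range (n + 1), partialSum mu.parts k ≤ partialSum lam.parts k :=
    fun k _ => hdom k
  exact eq_of_partialSum_eq fun k hk =>
    (sum_eq_sum_iff_of_le hle).mp hsum k (mem_range.mpr (Nat.lt_succ_of_le hk))

end PaddedPartition

theorem gini_stmt4_general (n : ℕ) :
    (∀ lam mu : PaddedPartition n, lam ≠ mu → lam.gini = mu.gini →
      ¬ PaddedPartition.Dom mu lam ∧ ¬ PaddedPartition.Dom lam mu) ∧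
    (∀ v : ℤ, IsAntichain PaddedPartition.Dom
      {lam : PaddedPartition n | lam.gini = v}) := by
  refine ⟨fun lam mu hne hgini => ⟨fun hdom => ?_, fun hdom => ?_⟩,
    fun v lam hlam mu hmu hne hdom => ?_⟩
  · exact hne (PaddedPartition.eq_of_dom_of_gini_eq hdom hgini.symm).symm
  · exact hne (PaddedPartition.eq_of_dom_of_gini_eq hdom hgini)
  · exact hne (PaddedPartition.eq_of_dom_of_gini_eq hdom (hlam.trans hmu.symm))

/-- If `λ` and `μ` are distinct partitions of a positive integer `n` with
`g(λ) = g(μ)`, then `λ` and `μ` are incomparable in the dominance order.  Consequently,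
every level set of the Gini index is an antichain in the dominance lattice. -/
theorem gini_stmt4 (n : ℕ) (hn : 0 < n) :
    (∀ lam mu : PaddedPartition n, lam ≠ mu → lam.gini = mu.gini →
      ¬ PaddedPartition.Dom mu lam ∧ ¬ PaddedPartition.Dom lam mu) ∧
    (∀ v : ℤ, IsAntichain PaddedPartition.Dom
      {lam : PaddedPartition n | lam.gini = v}) :=
  gini_stmt4_general n
end
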